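/- On the Cartan group, the composition of the Rumin differential d_c^{(2)}: E_0^2 → E_0^3 with d_c^{(3)}: E_0^3 → E_0^4 vanishes: the product of the 2×3 matrix [[(X_1X_2 + X_3)X_2 - X_5, √2(-X_1²X_2 + X_4), X_1³], [X_2³, -√2(X_2²X_1 + X_5), X_2X_1² - X_3X_1 + X_4]] with the 3×3 matrix [[-X_1X_2 - X_3, (1/√2)X_1², 0], [-(1/√2)X_2², -(3/2)X_3, (1/√2)X_1²], [0, -(1/√2)X_2², X_2X_1 - X_3]] is the zero 2×3 matrix of differential operators. -/

import Mathlib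

noncomputable section

/-- Points of the Cartan group, identified with `ℝ^5`. -/
abbrev Pt : Type := Fin 5 → ℝ

/-- Partial derivative in the `i`-th coordinate direction. -/
noncomputable def pd (i : Fin 5) (f : Pt → ℝ) : Pt → ℝ :=
  fun x => fderiv ℝ f x (Pi.single i 1)

/-- `X₁ = ∂₁`. -/
noncomputable def X1 (f : Pt → ℝ) : Pt → ℝ := pd 0 f

/-- `X₂ = ∂₂ + x₁∂₃ + (x₁²/2)∂₄ + x₁x₂∂₅`. -/
noncomputable def X2 (f : Pt → ℝ) : Pt → ℝ :=
  fun x => pd 1 f x + x 0 * pd 2 f x + (x 0) ^ 2 / 2 * pd 3 f x + x 0 * x 1 * pd 4 f x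

/-- `X₃ = ∂₃ + x₁∂₄ + x₂∂₅`. -/
noncomputable def X3 (f : Pt → ℝ) : Pt → ℝ :=
  fun x => pd 2 f x + x 0 * pd 3 f x + x 1 * pd 4 f x

/-- `X₄ = ∂₄`. -/
noncomputable def X4 (f : Pt → ℝ) : Pt → ℝ := pd 3 f

/-- `X₅ = ∂₅`. -/
noncomputable def X5 (f : Pt → ℝ) : Pt → ℝ := pd 4 f
@[fun_prop] lemma pd_contDiff (i : Fin 5) {f : Pt → ℝ} (hf : ContDiff ℝ (⊤ : ℕ∞) f) :
    ContDiff ℝ (⊤ : ℕ∞) (pd i f) :=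
  (hf.fderiv_right (by simp)).clm_apply contDiff_const

@[fun_prop] lemma pd_diff (i : Fin 5) {f : Pt → ℝ} (hf : ContDiff ℝ (⊤ : ℕ∞) f) :
    Differentiable ℝ (pd i f) :=
  (pd_contDiff i hf).differentiable (by simp)

@[fun_prop] lemma coord_contDiff (j : Fin 5) : ContDiff ℝ (⊤ : WithTop ℕ∞) (fun x : Pt => x j) := by
  fun_prop

lemma pd_add {f g : Pt → ℝ} (hf : Differentiable ℝ f) (hg : Differentiable ℝ g) (i : Fin 5)
    (y : Pt) : pd i (fun x => f x + g x) y = pd i f y + pd i g y := by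
  simp [pd, fderiv_fun_add (hf y) (hg y)]

lemma pd_mul {f g : Pt → ℝ} (hf : Differentiable ℝ f) (hg : Differentiable ℝ g) (i : Fin 5)
    (y : Pt) : pd i (fun x => f x * g x) y = f y * pd i g y + g y * pd i f y := by
  simp [pd, fderiv_fun_mul (hf y) (hg y)]

lemma pd_coord (i j : Fin 5) (y : Pt) : pd i (fun x : Pt => x j) y = if i = j then 1 else 0 := by
  have : (fun x : Pt => x j) = fun x : Pt => (ContinuousLinearMap.proj j : Pt →L[ℝ] ℝ) x := rfl
  rw [pd, this, ContinuousLinearMap.fderiv]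
  simp [Pi.single_apply, eq_comm]

lemma pd_comm {f : Pt → ℝ} (hf : ContDiff ℝ (⊤ : ℕ∞) f) (i j : Fin 5) (y : Pt) :
    pd i (pd j f) y = pd j (pd i f) y := by
  have hsym : IsSymmSndFDerivAt ℝ f y :=
    (hf.contDiffAt).isSymmSndFDerivAt (by rw [minSmoothness_of_isRCLikeNormedField]; exact WithTop.coe_le_coe.mpr le_top)
  have key : ∀ (v : Pt) (z : Pt), fderiv ℝ (fun w => fderiv ℝ f w v) z
      = (fderiv ℝ (fderiv ℝ f) z).flip v := by
    intro v z
    have hd : DifferentiableAt ℝ (fderiv ℝ f) z :=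
      ((hf.fderiv_right (m := (⊤ : ℕ∞)) (by simp)).differentiable (by simp)) z
    rw [fderiv_clm_apply hd (differentiableAt_const v)]
    ext w
    simp
  unfold pd
  rw [key, key]
  simp only [ContinuousLinearMap.flip_apply]
  exact hsym _ _


lemma pd_const (c : ℝ) (i : Fin 5) (y : Pt) : pd i (fun _ : Pt => c) y = 0 := by
  simp [pd]

lemma pd_mul_const {f : Pt → ℝ} (hf : Differentiable ℝ f) (c : ℝ) (i : Fin 5) (y : Pt) :
    pd i (fun x => f x * c) y = pd i f y * c := by
  simp [pd, fderiv_mul_const (hf y)]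
  ring

lemma X1_def (f : Pt → ℝ) : X1 f = pd 0 f := rfl
lemma X2_def (f : Pt → ℝ) : X2 f =
    fun x => pd 1 f x + x 0 * pd 2 f x + x 0 * x 0 * (2:ℝ)⁻¹ * pd 3 f x + x 0 * x 1 * pd 4 f x := by
  funext x; simp only [X2]; ring
lemma X3_def (f : Pt → ℝ) : X3 f = fun x => pd 2 f x + x 0 * pd 3 f x + x 1 * pd 4 f x := rfl
lemma X4_def (f : Pt → ℝ) : X4 f = pd 3 f := rfl
lemma X5_def (f : Pt → ℝ) : X5 f = pd 4 f := rfl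

@[fun_prop] lemma contDiffTop_differentiable {f : Pt → ℝ} (hf : ContDiff ℝ (⊤ : ℕ∞) f) :
    Differentiable ℝ f := hf.differentiable (by simp)

@[fun_prop] lemma X1_contDiff {f : Pt → ℝ} (hf : ContDiff ℝ (⊤ : ℕ∞) f) : ContDiff ℝ (⊤ : ℕ∞) (X1 f) :=
  pd_contDiff 0 hf
@[fun_prop] lemma X2_contDiff {f : Pt → ℝ} (hf : ContDiff ℝ (⊤ : ℕ∞) f) : ContDiff ℝ (⊤ : ℕ∞) (X2 f) := by
  rw [X2_def]; fun_prop
@[fun_prop] lemma X3_contDiff {f : Pt → ℝ} (hf : ContDiff ℝ (⊤ : ℕ∞) f) : ContDiff ℝ (⊤ : ℕ∞) (X3 f) := by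
  rw [X3_def]; fun_prop
@[fun_prop] lemma X4_contDiff {f : Pt → ℝ} (hf : ContDiff ℝ (⊤ : ℕ∞) f) : ContDiff ℝ (⊤ : ℕ∞) (X4 f) :=
  pd_contDiff 3 hf
@[fun_prop] lemma X5_contDiff {f : Pt → ℝ} (hf : ContDiff ℝ (⊤ : ℕ∞) f) : ContDiff ℝ (⊤ : ℕ∞) (X5 f) :=
  pd_contDiff 4 hf

lemma comm21 {f : Pt → ℝ} (hf : ContDiff ℝ (⊤ : ℕ∞) f) :
    X2 (X1 f) = fun x => X1 (X2 f) x - X3 f x := by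
  funext y
  simp only [X1_def, X2_def, X3_def]
  simp (disch := fun_prop) only [pd_add, pd_mul, pd_mul_const, pd_const, pd_coord,
    pd_comm hf 1 0, pd_comm hf 2 0, pd_comm hf 3 0, pd_comm hf 4 0]
  simp
  ring


section Aux

lemma pd_sub {f g : Pt → ℝ} (hf : Differentiable ℝ f) (hg : Differentiable ℝ g) (i : Fin 5)
    (y : Pt) : pd i (fun x => f x - g x) y = pd i f y - pd i g y := by
  simp [pd, fderiv_fun_sub (hf y) (hg y)]

lemma pd_neg {f : Pt → ℝ} (i : Fin 5) (y : Pt) :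
    pd i (fun x => -f x) y = -pd i f y := by
  simp [pd, fderiv_neg]

lemma pd_const_mul {f : Pt → ℝ} (hf : Differentiable ℝ f) (c : ℝ) (i : Fin 5) (y : Pt) :
    pd i (fun x => c * f x) y = c * pd i f y := by
  simp [pd, fderiv_const_mul (hf y)]

variable {f g : Pt → ℝ}

lemma X1_add (hf : ContDiff ℝ (⊤ : ℕ∞) f) (hg : ContDiff ℝ (⊤ : ℕ∞) g) :
    X1 (fun x => f x + g x) = fun x => X1 f x + X1 g x := by
  funext y; simp only [X1_def]
  simp (disch := fun_prop) only [pd_add]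
lemma X1_sub (hf : ContDiff ℝ (⊤ : ℕ∞) f) (hg : ContDiff ℝ (⊤ : ℕ∞) g) :
    X1 (fun x => f x - g x) = fun x => X1 f x - X1 g x := by
  funext y; simp only [X1_def]
  simp (disch := fun_prop) only [pd_sub]
lemma X1_neg : X1 (fun x => -f x) = fun x => -X1 f x := by
  funext y; simp only [X1_def]; simp only [pd_neg]
lemma X1_cmul (hf : ContDiff ℝ (⊤ : ℕ∞) f) (c : ℝ) :
    X1 (fun x => c * f x) = fun x => c * X1 f x := by
  funext y; simp only [X1_def]
  simp (disch := fun_prop) only [pd_const_mul]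
lemma X1_zero : X1 (fun _ : Pt => (0:ℝ)) = fun _ => 0 := by
  funext y; simp only [X1_def, pd_const]

lemma X2_add (hf : ContDiff ℝ (⊤ : ℕ∞) f) (hg : ContDiff ℝ (⊤ : ℕ∞) g) :
    X2 (fun x => f x + g x) = fun x => X2 f x + X2 g x := by
  funext y; simp only [X2_def]
  simp (disch := fun_prop) only [pd_add]; ring
lemma X2_sub (hf : ContDiff ℝ (⊤ : ℕ∞) f) (hg : ContDiff ℝ (⊤ : ℕ∞) g) :
    X2 (fun x => f x - g x) = fun x => X2 f x - X2 g x := by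
  funext y; simp only [X2_def]
  simp (disch := fun_prop) only [pd_sub]; ring
lemma X2_neg : X2 (fun x => -f x) = fun x => -X2 f x := by
  funext y; simp only [X2_def]; simp only [pd_neg]; ring
lemma X2_cmul (hf : ContDiff ℝ (⊤ : ℕ∞) f) (c : ℝ) :
    X2 (fun x => c * f x) = fun x => c * X2 f x := by
  funext y; simp only [X2_def]
  simp (disch := fun_prop) only [pd_const_mul]; ring
lemma X2_zero : X2 (fun _ : Pt => (0:ℝ)) = fun _ => 0 := by
  funext y; simp only [X2_def, pd_const]; ring

lemma X3_add (hf : ContDiff ℝ (⊤ : ℕ∞) f) (hg : ContDiff ℝ (⊤ : ℕ∞) g) :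
    X3 (fun x => f x + g x) = fun x => X3 f x + X3 g x := by
  funext y; simp only [X3_def]
  simp (disch := fun_prop) only [pd_add]; ring
lemma X3_sub (hf : ContDiff ℝ (⊤ : ℕ∞) f) (hg : ContDiff ℝ (⊤ : ℕ∞) g) :
    X3 (fun x => f x - g x) = fun x => X3 f x - X3 g x := by
  funext y; simp only [X3_def]
  simp (disch := fun_prop) only [pd_sub]; ring
lemma X3_neg : X3 (fun x => -f x) = fun x => -X3 f x := by
  funext y; simp only [X3_def]; simp only [pd_neg]; ring
lemma X3_cmul (hf : ContDiff ℝ (⊤ : ℕ∞) f) (c : ℝ) :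
    X3 (fun x => c * f x) = fun x => c * X3 f x := by
  funext y; simp only [X3_def]
  simp (disch := fun_prop) only [pd_const_mul]; ring
lemma X3_zero : X3 (fun _ : Pt => (0:ℝ)) = fun _ => 0 := by
  funext y; simp only [X3_def, pd_const]; ring

lemma X4_add (hf : ContDiff ℝ (⊤ : ℕ∞) f) (hg : ContDiff ℝ (⊤ : ℕ∞) g) :
    X4 (fun x => f x + g x) = fun x => X4 f x + X4 g x := by
  funext y; simp only [X4_def]
  simp (disch := fun_prop) only [pd_add]
lemma X4_sub (hf : ContDiff ℝ (⊤ : ℕ∞) f) (hg : ContDiff ℝ (⊤ : ℕ∞) g) :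
    X4 (fun x => f x - g x) = fun x => X4 f x - X4 g x := by
  funext y; simp only [X4_def]
  simp (disch := fun_prop) only [pd_sub]
lemma X4_neg : X4 (fun x => -f x) = fun x => -X4 f x := by
  funext y; simp only [X4_def]; simp only [pd_neg]
lemma X4_cmul (hf : ContDiff ℝ (⊤ : ℕ∞) f) (c : ℝ) :
    X4 (fun x => c * f x) = fun x => c * X4 f x := by
  funext y; simp only [X4_def]
  simp (disch := fun_prop) only [pd_const_mul]
lemma X4_zero : X4 (fun _ : Pt => (0:ℝ)) = fun _ => 0 := by
  funext y; simp only [X4_def, pd_const]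

lemma X5_add (hf : ContDiff ℝ (⊤ : ℕ∞) f) (hg : ContDiff ℝ (⊤ : ℕ∞) g) :
    X5 (fun x => f x + g x) = fun x => X5 f x + X5 g x := by
  funext y; simp only [X5_def]
  simp (disch := fun_prop) only [pd_add]
lemma X5_sub (hf : ContDiff ℝ (⊤ : ℕ∞) f) (hg : ContDiff ℝ (⊤ : ℕ∞) g) :
    X5 (fun x => f x - g x) = fun x => X5 f x - X5 g x := by
  funext y; simp only [X5_def]
  simp (disch := fun_prop) only [pd_sub]
lemma X5_neg : X5 (fun x => -f x) = fun x => -X5 f x := by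
  funext y; simp only [X5_def]; simp only [pd_neg]
lemma X5_cmul (hf : ContDiff ℝ (⊤ : ℕ∞) f) (c : ℝ) :
    X5 (fun x => c * f x) = fun x => c * X5 f x := by
  funext y; simp only [X5_def]
  simp (disch := fun_prop) only [pd_const_mul]
lemma X5_zero : X5 (fun _ : Pt => (0:ℝ)) = fun _ => 0 := by
  funext y; simp only [X5_def, pd_const]

lemma comm31 (hf : ContDiff ℝ (⊤ : ℕ∞) f) :
    X3 (X1 f) = fun x => X1 (X3 f) x - X4 f x := by
  funext y
  simp only [X1_def, X3_def, X4_def]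
  simp (disch := fun_prop) only [pd_add, pd_mul, pd_mul_const, pd_const, pd_coord,
    pd_comm hf 1 0, pd_comm hf 2 0, pd_comm hf 3 0, pd_comm hf 4 0,
    pd_comm hf 2 1, pd_comm hf 3 1, pd_comm hf 4 1, pd_comm hf 3 2, pd_comm hf 4 2,
    pd_comm hf 4 3]
  simp
  ring

lemma comm32 (hf : ContDiff ℝ (⊤ : ℕ∞) f) :
    X3 (X2 f) = fun x => X2 (X3 f) x - X5 f x := by
  funext y
  simp only [X2_def, X3_def, X5_def]
  simp (disch := fun_prop) only [pd_add, pd_mul, pd_mul_const, pd_const, pd_coord,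
    pd_comm hf 1 0, pd_comm hf 2 0, pd_comm hf 3 0, pd_comm hf 4 0,
    pd_comm hf 2 1, pd_comm hf 3 1, pd_comm hf 4 1, pd_comm hf 3 2, pd_comm hf 4 2,
    pd_comm hf 4 3]
  simp
  ring

lemma comm41 (hf : ContDiff ℝ (⊤ : ℕ∞) f) : X4 (X1 f) = X1 (X4 f) := by
  funext y
  simp only [X1_def, X4_def]
  exact pd_comm hf 3 0 y

lemma comm42 (hf : ContDiff ℝ (⊤ : ℕ∞) f) : X4 (X2 f) = X2 (X4 f) := by
  funext y
  simp only [X2_def, X4_def]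
  simp (disch := fun_prop) only [pd_add, pd_mul, pd_mul_const, pd_const, pd_coord,
    pd_comm hf 3 0, pd_comm hf 3 1, pd_comm hf 3 2, pd_comm hf 4 3]
  simp

lemma comm43 (hf : ContDiff ℝ (⊤ : ℕ∞) f) : X4 (X3 f) = X3 (X4 f) := by
  funext y
  simp only [X3_def, X4_def]
  simp (disch := fun_prop) only [pd_add, pd_mul, pd_mul_const, pd_const, pd_coord,
    pd_comm hf 3 0, pd_comm hf 3 1, pd_comm hf 3 2, pd_comm hf 4 3]
  simp

lemma comm51 (hf : ContDiff ℝ (⊤ : ℕ∞) f) : X5 (X1 f) = X1 (X5 f) := by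
  funext y
  simp only [X1_def, X5_def]
  exact pd_comm hf 4 0 y

lemma comm52 (hf : ContDiff ℝ (⊤ : ℕ∞) f) : X5 (X2 f) = X2 (X5 f) := by
  funext y
  simp only [X2_def, X5_def]
  simp (disch := fun_prop) only [pd_add, pd_mul, pd_mul_const, pd_const, pd_coord,
    pd_comm hf 4 0, pd_comm hf 4 1, pd_comm hf 4 2, pd_comm hf 4 3]
  simp

lemma comm53 (hf : ContDiff ℝ (⊤ : ℕ∞) f) : X5 (X3 f) = X3 (X5 f) := by
  funext y
  simp only [X3_def, X5_def]
  simp (disch := fun_prop) only [pd_add, pd_mul, pd_mul_const, pd_const, pd_coord,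
    pd_comm hf 4 0, pd_comm hf 4 1, pd_comm hf 4 2, pd_comm hf 4 3]
  simp

lemma comm54 (hf : ContDiff ℝ (⊤ : ℕ∞) f) : X5 (X4 f) = X4 (X5 f) := by
  funext y
  simp only [X4_def, X5_def]
  exact pd_comm hf 4 3 y

end Aux


/-- The Rumin differential `d_c^{(1)} : E₀¹ → E₀²` of the Cartan group,
as a 3×2 matrix of third-order left-invariant differential operators. -/
noncomputable def dc1 : Fin 3 → Fin 2 → (Pt → ℝ) → Pt → ℝ :=
  ![![fun u x => -(X1 (X1 (X2 u)) x) - X1 (X3 u) x - X4 u x,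
     fun u x => X1 (X1 (X1 u)) x],
    ![fun u x => -Real.sqrt 2 * (X1 (X2 (X2 u)) x + X5 u x),
     fun u x => Real.sqrt 2 * (X2 (X1 (X1 u)) x - X4 u x)],
    ![fun u x => -(X2 (X2 (X2 u)) x),
     fun u x => X2 (X2 (X1 u)) x - X2 (X3 u) x - X5 u x]]

/-- The Rumin differential `d_c^{(2)} : E₀² → E₀³` of the Cartan group,
as a 3×3 matrix of second-order left-invariant differential operators. -/
noncomputable def dc2 : Fin 3 → Fin 3 → (Pt → ℝ) → Pt → ℝ :=
  ![![fun u x => -(X1 (X2 u) x) - X3 u x,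
     fun u x => (1 / Real.sqrt 2) * X1 (X1 u) x,
     fun _ _ => 0],
    ![fun u x => -(1 / Real.sqrt 2) * X2 (X2 u) x,
     fun u x => -(3 / 2) * X3 u x,
     fun u x => (1 / Real.sqrt 2) * X1 (X1 u) x],
    ![fun _ _ => 0,
     fun u x => -(1 / Real.sqrt 2) * X2 (X2 u) x,
     fun u x => X2 (X1 u) x - X3 u x]]

/-- The Rumin differential `d_c^{(3)} : E₀³ → E₀⁴` of the Cartan group,
as a 2×3 matrix of third-order left-invariant differential operators. -/
noncomputable def dc3 : Fin 2 → Fin 3 → (Pt → ℝ) → Pt → ℝ :=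
  ![![fun u x => X1 (X2 (X2 u)) x + X3 (X2 u) x - X5 u x,
     fun u x => Real.sqrt 2 * (-(X1 (X1 (X2 u)) x) + X4 u x),
     fun u x => X1 (X1 (X1 u)) x],
    ![fun u x => X2 (X2 (X2 u)) x,
     fun u x => -Real.sqrt 2 * (X2 (X2 (X1 u)) x + X5 u x),
     fun u x => X2 (X1 (X1 u)) x - X3 (X1 u) x + X4 u x]]
/-- `d_c^{(3)} ∘ d_c^{(2)} = 0` on the Cartan group: the matrix product of the
two Rumin differentials is the zero 2×3 matrix of differential operators. -/
theorem stmt5 (u : Pt → ℝ) (hu : ContDiff ℝ (⊤ : ℕ∞) u) :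
    ∀ (i : Fin 2) (j : Fin 3) (x : Pt),
      (∑ k : Fin 3, dc3 i k (dc2 k j u) x) = 0 := by
  intro i j x
  have h0 : Real.sqrt 2 ≠ 0 := by positivity
  have h2 : Real.sqrt 2 * Real.sqrt 2 = 2 := Real.mul_self_sqrt (by norm_num)
  fin_cases i <;> fin_cases j <;>
  · simp only [dc3, dc2, Fin.sum_univ_three, Fin.isValue, Fin.zero_eta, Fin.mk_one,
      Fin.reduceFinMk, Matrix.cons_val', Matrix.cons_val_zero, Matrix.cons_val_one,
      Matrix.head_cons, Matrix.head_fin_const, Matrix.cons_val_fin_one, Matrix.empty_val',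
      Matrix.cons_val_two, Matrix.tail_cons]
    simp (disch := fun_prop) only [X1_add, X1_sub, X1_neg, X1_cmul, X1_zero,
      X2_add, X2_sub, X2_neg, X2_cmul, X2_zero, X3_add, X3_sub, X3_neg, X3_cmul, X3_zero,
      X4_add, X4_sub, X4_neg, X4_cmul, X4_zero, X5_add, X5_sub, X5_neg, X5_cmul, X5_zero,
      comm21, comm31, comm32, comm41, comm42, comm43, comm51, comm52, comm53, comm54]
    field_simp
    try ring_nf
    try simp only [show Real.sqrt 2 ^ 3 = 2 * Real.sqrt 2 by
      rw [pow_succ, show Real.sqrt 2 ^ 2 = 2 from Real.sq_sqrt (by norm_num)],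
      show Real.sqrt 2 ^ 2 = 2 from Real.sq_sqrt (by norm_num)]
    try ring

end
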